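/- Consider the correlated SBM posterior given adjacency matrices A, B, the community labels σ*² in G_2, the pruned singleton set S*, and the restriction of π* to [n] \ S*. Then there is a constant C₂ (depending only on the conditioning data) such that for every permutation π, P(π* = π | A, B, σ*², S*, π*{[n]\S*}) = C₂ · (√(p₁₀q₀₀/(p₀₀q₁₀)))^{ν⁺(π) − ν⁻(π)} · 1(π ∈ A*), where A* is the set of permutations π with S_π = S* and π{[n]\S_π} = π*{[n]\S*}. -/

import Mathlib

open MeasureTheory Finset
open scoped Classical

/-- Joint probability of the correlated edge-indicator pair `(A_{ij}, B'_{ij})`. -/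
noncomputable def pairP (p q s : ℝ) (same : Bool) (x y : Bool) : ℝ :=
  if x && y then s ^ 2 * (if same then p else q)
  else if x || y then s * (1 - s) * (if same then p else q)
  else 1 - (2 * s - s ^ 2) * (if same then p else q)

/-- `R_π`: the singletons of the intersection graph `G₁ ∧_π G₂` (here `a`, `b` are the
adjacency indicators of `G₁` and `G₂`). -/
def Rset (n : ℕ) (a b : Fin n → Fin n → Bool) (π : Equiv.Perm (Fin n)) : Set (Fin n) :=
  {i | ∀ j, ¬(a i j = true ∧ b (π i) (π j) = true)}

/-- `S_π`: the pruned singleton set: `i ∈ R_π`, `i` has no `G₁`-edge to `R_π`, and every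
`G₁`-neighbor `j` of `i` satisfies that `π(j)` has no `G₂`-neighbor in `π(R_π)`. -/
def Sset (n : ℕ) (a b : Fin n → Fin n → Bool) (π : Equiv.Perm (Fin n)) : Set (Fin n) :=
  {i | i ∈ Rset n a b π ∧ (∀ j ∈ Rset n a b π, a i j = false) ∧
       ∀ j, a i j = true → ∀ k ∈ Rset n a b π, b (π j) (π k) = false}

/-!
Given the data, `{π* = π}` is empty unless `π ∈ A*`, and otherwise it is the atom
`{π* = π, σ*¹ = σ*² ∘ π, A = a, B' = b ∘ π}` of probability `n!⁻¹ 2⁻ⁿ ∏_{i<j} pairP(…)`.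
Each pair factor splits as `p₀₀ · (p₁₀/p₀₀)^{A_ij} · (p₁₀/p₀₀)^{B_{π i π j}} ·
(p₀₀p₁₁/(p₀₁p₁₀))^{A_ij B_{π i π j}}`. The `p₀₀` and `B` factors are products over pairs of
`G₂`, merely relabelled by `π`; the common-edge factor is the same for all `π ∈ A*`, since
common edges avoid `S*` and `π` agrees with `π*` off `S*`; and the `A` factor is
`(p₁₀/p₀₀)^{ν⁺} (q₁₀/q₀₀)^{ν⁻}`, which is a power of `√(p₁₀q₀₀/(p₀₀q₁₀))` times a function of
`ν⁺ + ν⁻ = |E(G₁)|`.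
-/

section LtPairs
variable {α M : Type*} [Fintype α] [LinearOrder α] [CommMonoid M]

def ltPairs (α : Type*) [Fintype α] [LinearOrder α] : Finset (α × α) := {x | x.1 < x.2}

theorem prod_ite_lt_eq_prod_ltPairs (f : α → α → M) :
    ∏ i, ∏ j, (if i < j then f i j else 1) = ∏ x ∈ ltPairs α, f x.1 x.2 := by
  rw [ltPairs, prod_filter, ← univ_product_univ, prod_product]

theorem sum_boole_lt_eq_card_ltPairs (P : α → α → Prop) [DecidableRel P] :
    ∑ i, ∑ j, (if i < j ∧ P i j then (1 : ℤ) else 0) = #{x ∈ ltPairs α | P x.1 x.2} := by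
  rw [ltPairs, filter_filter, card_eq_sum_ones, Nat.cast_sum, sum_filter, ← univ_product_univ,
    sum_product]
  simp

theorem prod_ltPairs_perm_of_symm (g : α → α → M) (hg : ∀ u v, g u v = g v u)
    (π : Equiv.Perm α) :
    ∏ x ∈ ltPairs α, g (π x.1) (π x.2) = ∏ x ∈ ltPairs α, g x.1 x.2 := by
  have sort_mem (σ : Equiv.Perm α) {x : α × α} (hx : x ∈ ltPairs α) :
      (min (σ x.1) (σ x.2), max (σ x.1) (σ x.2)) ∈ ltPairs α := by
    simp only [ltPairs, mem_filter, mem_univ, true_and, min_lt_max] at hx ⊢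
    exact σ.injective.ne hx.ne
  have sort_perm (σ : Equiv.Perm α) {u v : α} (huv : u < v) :
      (min (σ.symm (min (σ u) (σ v))) (σ.symm (max (σ u) (σ v))),
        max (σ.symm (min (σ u) (σ v))) (σ.symm (max (σ u) (σ v)))) = (u, v) := by
    rcases le_total (σ u) (σ v) with h | h
    · simp [h, huv.le]
    · simp [h, huv.le]
  refine prod_nbij' (fun x => (min (π x.1) (π x.2), max (π x.1) (π x.2)))
    (fun y => (min (π.symm y.1) (π.symm y.2), max (π.symm y.1) (π.symm y.2)))
    (fun x hx => sort_mem π hx) (fun y hy => sort_mem π.symm hy) ?_ ?_ ?_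
  · rintro ⟨u, v⟩ huv
    exact sort_perm π (by simpa [ltPairs] using huv)
  · rintro ⟨u, v⟩ huv
    simpa using sort_perm π.symm (by simpa [ltPairs] using huv)
  · rintro ⟨u, v⟩ -
    rcases le_total (π u) (π v) with h | h
    · simp [h]
    · simp [h, hg (π u)]
end LtPairs

section ProbabilityFactors
variable {s r : ℝ}

/-- For a pair with edge density `r` and `p₀₀ = 1 - (2s - s²) r`: `edgeRatio s r = p₁₀ / p₀₀` and
`commonRatio s r = p₀₀ p₁₁ / (p₀₁ p₁₀)`. -/
noncomputable def edgeRatio (s r : ℝ) : ℝ := s * (1 - s) * r / (1 - (2 * s - s ^ 2) * r)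

noncomputable def commonRatio (s r : ℝ) : ℝ :=
  (1 - (2 * s - s ^ 2) * r) * (s ^ 2 * r) / (s * (1 - s) * r) ^ 2

theorem noEdgeProb_pos (hr0 : 0 < r) (hr1 : r < 1) : 0 < 1 - (2 * s - s ^ 2) * r := by
  nlinarith [sq_nonneg (1 - s)]

theorem edgeRatio_pos (hr0 : 0 < r) (hr1 : r < 1) (hs0 : 0 < s) (hs1 : s < 1) :
    0 < edgeRatio s r := by
  have := noEdgeProb_pos (s := s) hr0 hr1
  have : 0 < 1 - s := by linarith
  unfold edgeRatio; positivity

theorem jointProb_eq_mul (hr0 : 0 < r) (hr1 : r < 1) (hs0 : 0 < s) (hs1 : s < 1) (x y : Bool) :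
    (if x && y then s ^ 2 * r else if x || y then s * (1 - s) * r else 1 - (2 * s - s ^ 2) * r) =
      (1 - (2 * s - s ^ 2) * r) * (if x then edgeRatio s r else 1) *
        (if y then edgeRatio s r else 1) * (if x && y then commonRatio s r else 1) := by
  have hP := (noEdgeProb_pos (s := s) hr0 hr1).ne'
  have : 1 - s ≠ 0 := by linarith
  unfold edgeRatio commonRatio
  generalize 1 - (2 * s - s ^ 2) * r = P at *
  cases x <;> cases y <;> simp only [Bool.and_self, Bool.and_false, Bool.false_and,
    Bool.or_self, Bool.or_false, Bool.false_or, Bool.false_eq_true, ↓reduceIte] <;>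
    field_simp

theorem pairP_eq_mul {p q : ℝ} (hp0 : 0 < p) (hp1 : p < 1) (hq0 : 0 < q) (hq1 : q < 1)
    (hs0 : 0 < s) (hs1 : s < 1) (same x y : Bool) :
    pairP p q s same x y =
      (1 - (2 * s - s ^ 2) * (if same then p else q)) *
        (if x then edgeRatio s (if same then p else q) else 1) *
        (if y then edgeRatio s (if same then p else q) else 1) *
        (if x && y then commonRatio s (if same then p else q) else 1) :=
  jointProb_eq_mul (by split <;> assumption) (by split <;> assumption) hs0 hs1 x y

theorem pow_mul_pow_eq_sqrt_mul_zpow {x y : ℝ} (hx : 0 < x) (hy : 0 < y) (m k : ℕ) :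
    x ^ m * y ^ k = √(x * y) ^ (m + k) * √(x / y) ^ ((m : ℤ) - k) := by
  obtain ⟨u, hu, rfl⟩ : ∃ u, 0 < u ∧ x = u ^ 2 := ⟨√x, by positivity, (Real.sq_sqrt hx.le).symm⟩
  obtain ⟨v, hv, rfl⟩ : ∃ v, 0 < v ∧ y = v ^ 2 := ⟨√y, by positivity, (Real.sq_sqrt hy.le).symm⟩
  rw [← mul_pow, ← div_pow, Real.sqrt_sq (by positivity), Real.sqrt_sq (by positivity),
    zpow_sub₀ (by positivity), zpow_natCast, zpow_natCast, div_pow, div_pow]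
  field_simp
  ring
end ProbabilityFactors

section EdgeCounts
variable {α M : Type*} [Fintype α] [LinearOrder α] [CommMonoid M]
  (a : α → α → Bool) (ℓ : α → Bool) (π : Equiv.Perm α)

def nuPlus : ℕ := #{x ∈ ltPairs α | ℓ (π x.1) = ℓ (π x.2) ∧ a x.1 x.2 = true}

def nuMinus : ℕ := #{x ∈ ltPairs α | ℓ (π x.1) ≠ ℓ (π x.2) ∧ a x.1 x.2 = true}

theorem nuPlus_add_nuMinus :
    nuPlus a ℓ π + nuMinus a ℓ π = #{x ∈ ltPairs α | a x.1 x.2 = true} := by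
  rw [← card_filter_add_card_filter_not (fun x => ℓ (π x.1) = ℓ (π x.2)), filter_filter,
    filter_filter, nuPlus, nuMinus]
  simp only [and_comm]

theorem prod_ite_edge_eq_pow_mul_pow (u v : M) :
    ∏ x ∈ ltPairs α, (if a x.1 x.2 then (if ℓ (π x.1) == ℓ (π x.2) then u else v) else 1) =
      u ^ nuPlus a ℓ π * v ^ nuMinus a ℓ π := by
  rw [← prod_filter, prod_ite, prod_const, prod_const, filter_filter, filter_filter, nuPlus,
    nuMinus]
  simp only [beq_iff_eq, and_comm]
end EdgeCounts

theorem notMem_of_common_edge {n : ℕ} {a b : Fin n → Fin n → Bool}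
    (hsym : ∀ i j, a i j = a j i ∧ b i j = b j i) {π : Equiv.Perm (Fin n)} {S0 : Set (Fin n)}
    (hS : Sset n a b π = S0) {i j : Fin n} (ha : a i j = true) (hb : b (π i) (π j) = true) :
    i ∉ S0 ∧ j ∉ S0 := by
  subst hS
  exact ⟨fun hi => hi.1 j ⟨ha, hb⟩,
    fun hj => hj.1 i ⟨(hsym i j).1 ▸ ha, (hsym (π i) (π j)).2 ▸ hb⟩⟩

theorem exists_prod_pairP_eq_mul_zpow {n : ℕ} {p q s : ℝ} (hp0 : 0 < p) (hp1 : p < 1)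
    (hq0 : 0 < q) (hq1 : q < 1) (hs0 : 0 < s) (hs1 : s < 1) (a b : Fin n → Fin n → Bool)
    (hsym : ∀ i j, a i j = a j i ∧ b i j = b j i) (ℓ : Fin n → Bool) (S0 : Set (Fin n))
    (ρ0 : Fin n → Fin n) :
    ∃ K : ℝ, ∀ π : Equiv.Perm (Fin n), Sset n a b π = S0 → (∀ i ∉ S0, π i = ρ0 i) →
      ∏ x ∈ ltPairs (Fin n), pairP p q s (ℓ (π x.1) == ℓ (π x.2)) (a x.1 x.2) (b (π x.1) (π x.2))
        = K * √(edgeRatio s p / edgeRatio s q) ^ ((nuPlus a ℓ π : ℤ) - nuMinus a ℓ π) := by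
  obtain ⟨r, hr⟩ : ∃ r : Fin n → Fin n → ℝ, ∀ u v, r u v = if ℓ u == ℓ v then p else q :=
    ⟨_, fun _ _ => rfl⟩
  have hr_symm (u v : Fin n) : r u v = r v u := by rw [hr, hr, Bool.beq_comm]
  have hαp := edgeRatio_pos hp0 hp1 hs0 hs1
  have hαq := edgeRatio_pos hq0 hq1 hs0 hs1
  refine ⟨(∏ x ∈ ltPairs (Fin n), (1 - (2 * s - s ^ 2) * r x.1 x.2)) *
      (∏ x ∈ ltPairs (Fin n), if b x.1 x.2 then edgeRatio s (r x.1 x.2) else 1) *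
      (∏ x ∈ ltPairs (Fin n), if x.1 ∉ S0 ∧ x.2 ∉ S0 ∧ (a x.1 x.2 && b (ρ0 x.1) (ρ0 x.2))
        then commonRatio s (r (ρ0 x.1) (ρ0 x.2)) else 1) *
      √(edgeRatio s p * edgeRatio s q) ^ #{x ∈ ltPairs (Fin n) | a x.1 x.2 = true},
    fun π hS hρ => ?_⟩
  have hW := prod_ltPairs_perm_of_symm (fun u v => 1 - (2 * s - s ^ 2) * r u v)
    (fun u v => by rw [hr_symm]) π
  have hB := prod_ltPairs_perm_of_symm (fun u v => if b u v then edgeRatio s (r u v) else 1)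
    (fun u v => by rw [hr_symm, (hsym u v).2]) π
  -- common edges of `G₁ ∧_π G₂` avoid `S0`, where `π` agrees with `ρ0`
  have hC : ∀ x ∈ ltPairs (Fin n),
      (if a x.1 x.2 && b (π x.1) (π x.2) then commonRatio s (r (π x.1) (π x.2)) else 1) =
        if x.1 ∉ S0 ∧ x.2 ∉ S0 ∧ (a x.1 x.2 && b (ρ0 x.1) (ρ0 x.2))
          then commonRatio s (r (ρ0 x.1) (ρ0 x.2)) else 1 := by
    rintro ⟨i, j⟩ -
    by_cases hij : i ∉ S0 ∧ j ∉ S0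
    · simp only [hρ i hij.1, hρ j hij.2, hij, not_false_eq_true, true_and]
    · rw [if_neg fun h => ?_, if_neg (by tauto)]
      rw [Bool.and_eq_true] at h
      exact hij (notMem_of_common_edge hsym hS h.1 h.2)
  have hA : ∏ x ∈ ltPairs (Fin n), (if a x.1 x.2 then edgeRatio s (r (π x.1) (π x.2)) else 1) =
      √(edgeRatio s p * edgeRatio s q) ^ #{x ∈ ltPairs (Fin n) | a x.1 x.2 = true} *
        √(edgeRatio s p / edgeRatio s q) ^ ((nuPlus a ℓ π : ℤ) - nuMinus a ℓ π) := by
    simp only [hr, apply_ite (edgeRatio s)]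
    rw [prod_ite_edge_eq_pow_mul_pow, pow_mul_pow_eq_sqrt_mul_zpow hαp hαq,
      nuPlus_add_nuMinus]
  simp only [pairP_eq_mul hp0 hp1 hq0 hq1 hs0 hs1, ← hr, prod_mul_distrib]
  rw [hW, hB, prod_congr rfl hC, hA]
  ring

section MeasureFacts

theorem measure_eq_zero_of_disjoint_of_measure_eq_one {Ω : Type*} [MeasurableSpace Ω]
    {μ : Measure Ω} [IsProbabilityMeasure μ] {s t : Set Ω} (hs : MeasurableSet s)
    (hst : Disjoint s t) (ht : μ t = 1) : μ s = 0 := by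
  have h := prob_le_one (μ := μ) (s := s ∪ t)
  rw [measure_union' hst hs, ht] at h
  exact nonpos_iff_eq_zero.mp
    ((ENNReal.add_le_add_iff_right ENNReal.one_ne_top).mp (by simpa using h))

theorem measurableSet_of_measurableSet_inter_fiber {Ω ι : Type*} [MeasurableSpace Ω]
    [Countable ι] {f : Ω → ι} {E : Set Ω} (h : ∀ i, MeasurableSet (E ∩ {ω | f ω = i})) :
    MeasurableSet E := by
  have hE : E = ⋃ i, E ∩ {ω | f ω = i} := by ext ω; simp
  rw [hE]
  exact .iUnion h

end MeasureFacts

section ConditioningEvent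
variable {Ω : Type} {n : ℕ} {πs : Ω → Equiv.Perm (Fin n)} {σ1 σ2 : Ω → Fin n → Bool}
  {A B' B : Ω → Fin n → Fin n → Bool} {a b : Fin n → Fin n → Bool} {ℓ2 : Fin n → Bool}
  {S0 : Set (Fin n)} {ρ0 : Fin n → Fin n}

theorem observed_inter_eq_ite (hB : ∀ ω i j, B ω i j = B' ω ((πs ω).symm i) ((πs ω).symm j))
    (hσ2 : ∀ ω i, σ2 ω i = σ1 ω ((πs ω).symm i)) (π : Equiv.Perm (Fin n)) :
    {ω | A ω = a ∧ B ω = b ∧ σ2 ω = ℓ2 ∧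
        Sset n (A ω) (B ω) (πs ω) = S0 ∧ ∀ i, i ∉ S0 → πs ω i = ρ0 i} ∩ {ω | πs ω = π} =
      if Sset n a b π = S0 ∧ ∀ i, i ∉ S0 → π i = ρ0 i then
        {ω | πs ω = π ∧ σ1 ω = (fun i => ℓ2 (π i)) ∧ A ω = a ∧
          B' ω = fun u v => b (π u) (π v)}
      else ∅ := by
  ext ω
  by_cases hω : πs ω = π
  · have hBω : B ω = b ↔ B' ω = fun u v => b (π u) (π v) := by
      rw [funext₂ (hB ω), hω]
      constructor
      · rintro rfl; simp
      · rintro h; simp [h]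
    have hσω : σ2 ω = ℓ2 ↔ σ1 ω = fun i => ℓ2 (π i) := by
      rw [funext (hσ2 ω), hω]
      constructor
      · rintro rfl; simp
      · rintro h; simp [h]
    split_ifs with hπ
    · simp only [Set.mem_inter_iff, Set.mem_ofPred_eq, hω, hBω, hσω, true_and, and_true]
      constructor
      · rintro ⟨hA, hB', hσ, -⟩
        exact ⟨hσ, hA, hB'⟩
      · rintro ⟨hσ, rfl, hB'⟩
        exact ⟨rfl, hB', hσ, hBω.mpr hB' ▸ hπ⟩
    · simp only [Set.mem_inter_iff, Set.mem_ofPred_eq, hω, and_true, Set.mem_empty_iff_false,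
        iff_false]
      rintro ⟨rfl, rfl, -, hS, hρ⟩
      exact hπ ⟨hS, hρ⟩
  · simp [hω]

theorem measure_relabeled_eq_zero_of_not_valid [MeasurableSpace Ω] {ℙ : Measure Ω}
    [IsProbabilityMeasure ℙ]
    (hmeas : ∀ (π0 : Equiv.Perm (Fin n)) (ℓ : Fin n → Bool) (e1 e2 : Fin n → Fin n → Bool),
      MeasurableSet {ω | πs ω = π0 ∧ σ1 ω = ℓ ∧ A ω = e1 ∧ B' ω = e2})
    (hvalid : ℙ {ω | (∀ i j, A ω i j = A ω j i ∧ B' ω i j = B' ω j i) ∧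
        ∀ i, A ω i i = false ∧ B' ω i i = false} = 1)
    (hab : ¬((∀ i j, a i j = a j i ∧ b i j = b j i) ∧ ∀ i, a i i = false ∧ b i i = false))
    (π : Equiv.Perm (Fin n)) (ℓ : Fin n → Bool) :
    ℙ {ω | πs ω = π ∧ σ1 ω = ℓ ∧ A ω = a ∧ B' ω = fun u v => b (π u) (π v)} = 0 := by
  refine measure_eq_zero_of_disjoint_of_measure_eq_one (hmeas _ _ _ _)
    (Set.disjoint_left.mpr ?_) hvalid
  rintro ω ⟨-, -, rfl, hB'⟩ ⟨hsym, hdiag⟩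
  have hb (u v : Fin n) : b u v = B' ω (π.symm u) (π.symm v) := by simp [hB']
  exact hab ⟨fun i j => ⟨(hsym i j).1, by rw [hb, hb, (hsym _ _).2]⟩,
    fun i => ⟨(hdiag i).1, by rw [hb, (hdiag _).2]⟩⟩
end ConditioningEvent

/-- posterior of `π*` in the correlated SBM given `A`, `B`, the `G₂`-labels
`σ*²`, the pruned singleton set `S*`, and the restriction of `π*` to `[n] \ S*`: there is
a constant `C₂` (depending only on the conditioning data) with
`P(π* = π | data) = C₂ (√(p₁₀q₀₀/(p₀₀q₁₀)))^{ν⁺(π) − ν⁻(π)} 1(π ∈ A*)`. -/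
theorem statement16 {Ω : Type} [MeasurableSpace Ω] (ℙ : Measure Ω)
    [IsProbabilityMeasure ℙ] (n : ℕ) (p q s : ℝ)
    (hp0 : 0 < p) (hp1 : p < 1) (hq0 : 0 < q) (hq1 : q < 1) (hs0 : 0 < s) (hs1 : s < 1)
    (πs : Ω → Equiv.Perm (Fin n)) (σ1 : Ω → Fin n → Bool)
    (A B' : Ω → Fin n → Fin n → Bool)
    (hmeas : ∀ (π0 : Equiv.Perm (Fin n)) (ℓ : Fin n → Bool)
        (e1 e2 : Fin n → Fin n → Bool),
      MeasurableSet {ω | πs ω = π0 ∧ σ1 ω = ℓ ∧ A ω = e1 ∧ B' ω = e2})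
    -- the joint law of (π*, σ*¹, A, B'): π* uniform and independent, labels i.i.d.
    -- uniform, and given these the pairs (A_{ij}, B'_{ij}) independent with law pairP
    (hvalid : ℙ {ω | (∀ i j, A ω i j = A ω j i ∧ B' ω i j = B' ω j i) ∧
        ∀ i, A ω i i = false ∧ B' ω i i = false} = 1)
    (hlaw : ∀ (π0 : Equiv.Perm (Fin n)) (ℓ : Fin n → Bool)
        (e1 e2 : Fin n → Fin n → Bool),
      (∀ i j, e1 i j = e1 j i ∧ e2 i j = e2 j i) →
      (∀ i, e1 i i = false ∧ e2 i i = false) →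
      (ℙ {ω | πs ω = π0 ∧ σ1 ω = ℓ ∧ A ω = e1 ∧ B' ω = e2}).toReal =
        (1 / (Nat.factorial n : ℝ)) * (1 / 2 : ℝ) ^ n *
          ∏ i : Fin n, ∏ j : Fin n,
            (if i < j then pairP p q s (ℓ i == ℓ j) (e1 i j) (e2 i j) else 1))
    -- the relabeled adjacency of G₂ and the G₂-labels
    (B : Ω → Fin n → Fin n → Bool)
    (hB : ∀ ω i j, B ω i j = B' ω ((πs ω).symm i) ((πs ω).symm j))
    (σ2 : Ω → Fin n → Bool) (hσ2 : ∀ ω i, σ2 ω i = σ1 ω ((πs ω).symm i))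
    -- the observed data
    (a b : Fin n → Fin n → Bool) (ℓ2 : Fin n → Bool)
    (S0 : Set (Fin n)) (ρ0 : Fin n → Fin n) :
    ∃ C2 : ℝ, ∀ π : Equiv.Perm (Fin n),
      (ProbabilityTheory.cond ℙ
          {ω | A ω = a ∧ B ω = b ∧ σ2 ω = ℓ2 ∧
               Sset n (A ω) (B ω) (πs ω) = S0 ∧ ∀ i, i ∉ S0 → πs ω i = ρ0 i}
          {ω | πs ω = π}).toReal
        = C2 *
          (Real.sqrt ((s * (1 - s) * p * (1 - (2 * s - s ^ 2) * q)) /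
              ((1 - (2 * s - s ^ 2) * p) * (s * (1 - s) * q))))
            ^ ((∑ i : Fin n, ∑ j : Fin n,
                  (if i < j ∧ ℓ2 (π i) = ℓ2 (π j) ∧ a i j = true then (1 : ℤ) else 0))
               - (∑ i : Fin n, ∑ j : Fin n,
                  (if i < j ∧ ℓ2 (π i) ≠ ℓ2 (π j) ∧ a i j = true then (1 : ℤ) else 0)))
          * (if Sset n a b π = S0 ∧ ∀ i, i ∉ S0 → π i = ρ0 i then 1 else 0) := by
  set E := {ω | A ω = a ∧ B ω = b ∧ σ2 ω = ℓ2 ∧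
    Sset n (A ω) (B ω) (πs ω) = S0 ∧ ∀ i, i ∉ S0 → πs ω i = ρ0 i}
  have hE : MeasurableSet E := measurableSet_of_measurableSet_inter_fiber fun π => by
    rw [observed_inter_eq_ite hB hσ2]
    split_ifs
    exacts [hmeas _ _ _ _, .empty]
  obtain ⟨c, hc⟩ : ∃ c : ℝ, ∀ π : Equiv.Perm (Fin n),
      (ℙ (E ∩ {ω | πs ω = π})).toReal =
        c * √(edgeRatio s p / edgeRatio s q) ^ ((nuPlus a ℓ2 π : ℤ) - nuMinus a ℓ2 π) *
          (if Sset n a b π = S0 ∧ ∀ i, i ∉ S0 → π i = ρ0 i then 1 else 0) := by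
    by_cases hab : (∀ i j, a i j = a j i ∧ b i j = b j i) ∧ ∀ i, a i i = false ∧ b i i = false
    · obtain ⟨K, hK⟩ := exists_prod_pairP_eq_mul_zpow hp0 hp1 hq0 hq1 hs0 hs1 a b hab.1 ℓ2 S0 ρ0
      refine ⟨1 / (Nat.factorial n : ℝ) * (1 / 2 : ℝ) ^ n * K, fun π => ?_⟩
      rw [observed_inter_eq_ite hB hσ2]
      split_ifs with hπ
      · rw [hlaw _ _ _ _ (fun i j => ⟨(hab.1 i j).1, (hab.1 (π i) (π j)).2⟩)
          (fun i => ⟨(hab.2 i).1, (hab.2 (π i)).2⟩), prod_ite_lt_eq_prod_ltPairs, hK π hπ.1 hπ.2]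
        ring
      · simp
    · refine ⟨0, fun π => ?_⟩
      rw [observed_inter_eq_ite hB hσ2]
      split_ifs <;> simp [measure_relabeled_eq_zero_of_not_valid hmeas hvalid hab]
  refine ⟨c / (ℙ E).toReal, fun π => ?_⟩
  rw [ProbabilityTheory.cond_apply hE, ENNReal.toReal_mul, ENNReal.toReal_inv, hc,
    sum_boole_lt_eq_card_ltPairs, sum_boole_lt_eq_card_ltPairs, nuPlus, nuMinus, edgeRatio,
    edgeRatio, div_div_div_eq]
  ring
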